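/- arXiv:1304.0679 — 5 statements merged into one kernel-verified Lean document; each statement's English description precedes it below -/
import Mathlib

section
/- Let N ≥ 2, let v : ℝ³ × ℝ³ → [0,∞] be a measurable symmetric pair potential (v(x,y) = v(y,x)), and let p₁ be a probability measure on ℝ³. Then the infimum over all symmetric N-point probability measures p_N on (ℝ³)^N whose one-point marginal is p₁ of ∫ Σ_{1≤i<j≤N} v(x_i,x_j) dp_N equals the infimum over all N-density representable probability measures p₂ on ℝ³ × ℝ³ whose first marginal is p₁ of (N choose 2) ∫ v dp₂. -/
open MeasureTheory ENNReal

noncomputable section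

abbrev R3 : Type := EuclideanSpace ℝ (Fin 3)

def IsSymmetricMeasure {N : ℕ} (p : Measure (Fin N → R3)) : Prop :=
  ∀ σ : Equiv.Perm (Fin N), p.map (fun x => x ∘ σ) = p

def pairMarginal {N : ℕ} (hN : 2 ≤ N) (p : Measure (Fin N → R3)) : Measure (R3 × R3) :=
  p.map (fun x => (x ⟨0, by omega⟩, x ⟨1, by omega⟩))

def NDensityRep (N : ℕ) (hN : 2 ≤ N) (p₂ : Measure (R3 × R3)) : Prop :=
  ∃ pN : Measure (Fin N → R3), IsProbabilityMeasure pN ∧ IsSymmetricMeasure pN ∧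
    pairMarginal hN pN = p₂

lemma exists_perm_pair {N : ℕ} (hN : 2 ≤ N) (i j : Fin N) (hij : i < j) :
    ∃ σ : Equiv.Perm (Fin N), σ ⟨0, by omega⟩ = i ∧ σ ⟨1, by omega⟩ = j := by
  set z : Fin N := ⟨0, by omega⟩ with hz
  set o : Fin N := ⟨1, by omega⟩ with ho
  have hzo : z ≠ o := by simp [hz, ho, Fin.ext_iff]
  set τ : Equiv.Perm (Fin N) := Equiv.swap z i with hτ
  have hjz : τ j ≠ z := by
    intro h
    have : j = τ z := by
      have := congrArg τ h
      rwa [Equiv.swap_apply_self] at this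
    rw [this, hτ, Equiv.swap_apply_left] at hij
    exact absurd hij (lt_irrefl _)
  refine ⟨τ * Equiv.swap o (τ j), ?_, ?_⟩
  · have : Equiv.swap o (τ j) z = z :=
      Equiv.swap_apply_of_ne_of_ne hzo hjz.symm
    rw [Equiv.Perm.mul_apply, this, hτ, Equiv.swap_apply_left]
  · simp [Equiv.Perm.mul_apply, Equiv.swap_apply_left, Equiv.swap_apply_self]
    exact Equiv.swap_apply_self _ _ _

lemma sum_card_Ioi (N : ℕ) : ∑ i : Fin N, (Finset.Ioi i).card = N.choose 2 := by
  simp only [Fin.card_Ioi, Fin.sum_univ_eq_sum_range]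
  rw [← Finset.sum_range_reflect, Nat.choose_two_right, ← Finset.sum_range_id]
  apply Finset.sum_congr rfl
  intro k hk
  simp at hk
  omega

lemma meas_pair {N : ℕ} (i j : Fin N) :
    Measurable (fun x : Fin N → R3 => (x i, x j)) :=
  (measurable_pi_apply i).prodMk (measurable_pi_apply j)

lemma energy_eq {N : ℕ} (hN : 2 ≤ N) (v : R3 × R3 → ℝ≥0∞) (hv : Measurable v)
    (pN : Measure (Fin N → R3)) (hsym : IsSymmetricMeasure pN) :
    ∫⁻ x, ∑ i : Fin N, ∑ j ∈ Finset.Ioi i, v (x i, x j) ∂pN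
      = (N.choose 2 : ℝ≥0∞) * ∫⁻ z, v z ∂(pairMarginal hN pN) := by
  have hmeas : ∀ i j : Fin N, Measurable (fun x : Fin N → R3 => v (x i, x j)) :=
    fun i j => hv.comp (meas_pair i j)
  rw [lintegral_finset_sum _ (fun i _ => Finset.measurable_sum _ (fun j _ => hmeas i j))]
  have key : ∀ i j : Fin N, i < j →
      ∫⁻ x, v (x i, x j) ∂pN = ∫⁻ z, v z ∂(pairMarginal hN pN) := by
    intro i j hij
    obtain ⟨σ, hσ0, hσ1⟩ := exists_perm_pair hN i j hij
    have hpm : pairMarginal hN pN = pN.map (fun x => (x i, x j)) := by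
      rw [pairMarginal]
      conv_lhs => rw [← hsym σ]
      rw [Measure.map_map (meas_pair _ _) (measurable_pi_lambda _
        (fun a => measurable_pi_apply (σ a)))]
      simp only [Function.comp_def, hσ0, hσ1]
    rw [hpm, lintegral_map hv (meas_pair i j)]
  calc ∑ i : Fin N, ∫⁻ x, ∑ j ∈ Finset.Ioi i, v (x i, x j) ∂pN
      = ∑ i : Fin N, ∑ j ∈ Finset.Ioi i, ∫⁻ x, v (x i, x j) ∂pN := by
        refine Finset.sum_congr rfl fun i _ => ?_
        exact lintegral_finset_sum _ (fun j _ => hmeas i j)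
    _ = ∑ i : Fin N, ∑ _j ∈ Finset.Ioi i, ∫⁻ z, v z ∂(pairMarginal hN pN) := by
        refine Finset.sum_congr rfl fun i _ => Finset.sum_congr rfl fun j hj => ?_
        exact key i j (Finset.mem_Ioi.mp hj)
    _ = (N.choose 2 : ℝ≥0∞) * ∫⁻ z, v z ∂(pairMarginal hN pN) := by
        simp only [Finset.sum_const, nsmul_eq_mul, ← Finset.sum_mul]
        rw [← Nat.cast_sum, sum_card_Ioi]

/-- The SCE energy via density representability: the infimum of the `N`-body interaction
energy `∫ Σ_{i<j} v(x_i,x_j) dp_N` over symmetric `N`-point probability measures with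
one-point marginal `p₁` equals the infimum of `(N choose 2) ∫ v dp₂` over `N`-density
representable pair probability measures with first marginal `p₁`. -/
theorem sce_via_density_representability (N : ℕ) (hN : 2 ≤ N)
    (v : R3 × R3 → ℝ≥0∞) (hv : Measurable v) (hvsymm : ∀ x y : R3, v (x, y) = v (y, x))
    (p₁ : Measure R3) [IsProbabilityMeasure p₁] :
    sInf {E : ℝ≥0∞ | ∃ pN : Measure (Fin N → R3), IsProbabilityMeasure pN ∧
        IsSymmetricMeasure pN ∧ pN.map (fun x => x ⟨0, by omega⟩) = p₁ ∧
        E = ∫⁻ x, ∑ i : Fin N, ∑ j ∈ Finset.Ioi i, v (x i, x j) ∂pN}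
      =
    sInf {E : ℝ≥0∞ | ∃ p₂ : Measure (R3 × R3), IsProbabilityMeasure p₂ ∧
        NDensityRep N hN p₂ ∧ p₂.map Prod.fst = p₁ ∧
        E = (N.choose 2 : ℝ≥0∞) * ∫⁻ z, v z ∂p₂} := by
  congr 1
  ext E
  constructor
  · rintro ⟨pN, hprob, hsym, hmarg, rfl⟩
    refine ⟨pairMarginal hN pN, ?_, ⟨pN, hprob, hsym, rfl⟩, ?_, ?_⟩
    · exact Measure.isProbabilityMeasure_map (meas_pair _ _).aemeasurable
    · rw [pairMarginal, Measure.map_map measurable_fst (meas_pair _ _)]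
      exact hmarg
    · exact energy_eq hN v hv pN hsym
  · rintro ⟨p₂, hprob₂, ⟨pN, hprob, hsym, hpair⟩, hmarg, rfl⟩
    refine ⟨pN, hprob, hsym, ?_, ?_⟩
    · rw [← hmarg, ← hpair, pairMarginal,
        Measure.map_map measurable_fst (meas_pair _ _)]
      rfl
    · rw [energy_eq hN v hv pN hsym, hpair]

end
end

section
/- Let A, B ∈ ℝ³ with A ≠ B. The totally anticorrelated probability measure p₂ = ½(δ_A ⊗ δ_B + δ_B ⊗ δ_A) on ℝ³ × ℝ³ is not 3-density representable: there exists no symmetric probability measure p₃ on (ℝ³)³ whose two-point marginal equals p₂. -/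
open MeasureTheory ENNReal

noncomputable section

/-- For `A ≠ B`, the totally anticorrelated probability measure
`p₂ = ½(δ_A ⊗ δ_B + δ_B ⊗ δ_A)` is not 3-density representable. -/
theorem anticorrelated_not_three_rep (A B : R3) (hAB : A ≠ B) :
    ¬ NDensityRep 3 (by omega)
        ((2 : ℝ≥0∞)⁻¹ • ((Measure.dirac A).prod (Measure.dirac B))
          + (2 : ℝ≥0∞)⁻¹ • ((Measure.dirac B).prod (Measure.dirac A))) := by
  rintro ⟨p, hprob, hsym, hmar⟩
  classical
  set D : Set (R3 × R3) := {(A, B), (B, A)} with hDdef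
  have hDmeas : MeasurableSet D :=
    ((Set.finite_singleton _).insert _).measurableSet
  have hmf : ∀ i j : Fin 3, Measurable (fun x : Fin 3 → R3 => (x i, x j)) := fun i j =>
    (measurable_pi_apply i).prodMk (measurable_pi_apply j)
  have h01 : p ((fun x : Fin 3 → R3 => (x 0, x 1)) ⁻¹' Dᶜ) = 0 := by
    have h := congrArg (fun μ : Measure (R3 × R3) => μ Dᶜ) hmar
    simp only [pairMarginal] at h
    rw [Measure.map_apply (hmf ⟨0, by omega⟩ ⟨1, by omega⟩) hDmeas.compl] at h
    simpa [Fin.mk_zero, Fin.mk_one, Measure.dirac_prod_dirac, Measure.dirac_apply, hDdef]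
      using h
  have perm_null : ∀ σ : Equiv.Perm (Fin 3),
      p ((fun x : Fin 3 → R3 => (x (σ 0), x (σ 1))) ⁻¹' Dᶜ) = 0 := by
    intro σ
    have hmeasσ : Measurable (fun x : Fin 3 → R3 => x ∘ σ) :=
      measurable_pi_lambda _ (fun i => measurable_pi_apply (σ i))
    have h2 : p ((fun x : Fin 3 → R3 => x ∘ σ) ⁻¹'
        ((fun x : Fin 3 → R3 => (x 0, x 1)) ⁻¹' Dᶜ)) = 0 := by
      rw [← Measure.map_apply hmeasσ ((hmf 0 1) hDmeas.compl), hsym σ]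
      exact h01
    exact h2
  have hA := h01
  have hB : p ((fun x : Fin 3 → R3 => (x 0, x 2)) ⁻¹' Dᶜ) = 0 := by
    have := perm_null (Equiv.swap 1 2)
    simpa [Equiv.swap_apply_def] using this
  have hC : p ((fun x : Fin 3 → R3 => (x 2, x 1)) ⁻¹' Dᶜ) = 0 := by
    have := perm_null (Equiv.swap 0 2)
    simpa [Equiv.swap_apply_def] using this
  have hcover : (Set.univ : Set (Fin 3 → R3)) ⊆
      ((fun x : Fin 3 → R3 => (x 0, x 1)) ⁻¹' Dᶜ) ∪
      ((fun x : Fin 3 → R3 => (x 0, x 2)) ⁻¹' Dᶜ) ∪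
      ((fun x : Fin 3 → R3 => (x 2, x 1)) ⁻¹' Dᶜ) := by
    intro x _
    by_contra hx
    simp only [Set.mem_union, Set.mem_preimage, Set.mem_compl_iff, not_or, not_not] at hx
    obtain ⟨⟨h1, h2⟩, h3⟩ := hx
    simp only [hDdef, Set.mem_insert_iff, Set.mem_singleton_iff, Prod.mk.injEq] at h1 h2 h3
    rcases h1 with ⟨e1, e2⟩ | ⟨e1, e2⟩ <;> rcases h2 with ⟨f1, f2⟩ | ⟨f1, f2⟩ <;>
      rcases h3 with ⟨g1, g2⟩ | ⟨g1, g2⟩ <;> exact hAB (by simp_all)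
  have hzero : p Set.univ = 0 :=
    measure_mono_null hcover (measure_union_null (measure_union_null hA hB) hC)
  rw [measure_univ] at hzero
  exact one_ne_zero hzero

end
end

section
/- Let N ≥ 2, A, B ∈ ℝ³, 0 ≤ K ≤ N, and set t = K/N. Then the two-point marginal of the symmetrization of δ_A^{⊗(N−K)} ⊗ δ_B^{⊗K} equals the mean-field pair measure ((1−t)δ_A + tδ_B) ⊗ ((1−t)δ_A + tδ_B) plus the correction (t(1−t)/(N−1)) (−δ_A⊗δ_A − δ_B⊗δ_B + δ_A⊗δ_B + δ_B⊗δ_A) (as an identity of signed measures on ℝ³ × ℝ³). -/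
open MeasureTheory ENNReal

noncomputable section

lemma sum_perm_apply_zero' {M : Type*} [AddCommMonoid M] {m : ℕ} (G : Fin (m+1) → M) :
    ∑ e : Equiv.Perm (Fin (m+1)), G (e 0) = m.factorial • ∑ q, G q := by
  rw [← Equiv.sum_comp (Equiv.Perm.decomposeFin).symm (fun e => G (e 0)), Fintype.sum_prod_type]
  simp only [Equiv.Perm.decomposeFin_symm_apply_zero, Finset.sum_const, Fintype.card_perm,
    Fintype.card_fin, Finset.card_univ]
  rw [Finset.smul_sum]

lemma sum_perm_pair' {M : Type*} [AddCommMonoid M] {n : ℕ} (F : Fin (n+2) → Fin (n+2) → M) :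
    ∑ σ : Equiv.Perm (Fin (n+2)), F (σ 0) (σ 1) + n.factorial • ∑ p, F p p
      = n.factorial • ∑ p, ∑ j, F p j := by
  have h1 : ∑ σ : Equiv.Perm (Fin (n+2)), F (σ 0) (σ 1)
      = ∑ p : Fin (n+2), n.factorial • ∑ q : Fin (n+1), F p (Equiv.swap 0 p q.succ) := by
    rw [← Equiv.sum_comp (Equiv.Perm.decomposeFin).symm (fun σ => F (σ 0) (σ 1)),
        Fintype.sum_prod_type]
    refine Finset.sum_congr rfl fun p _ => ?_
    simp only [Equiv.Perm.decomposeFin_symm_apply_zero, Equiv.Perm.decomposeFin_symm_apply_one]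
    exact sum_perm_apply_zero' (fun q => F p (Equiv.swap 0 p q.succ))
  have h2 : ∀ p : Fin (n+2), F p p + ∑ q : Fin (n+1), F p (Equiv.swap 0 p q.succ) = ∑ j, F p j := by
    intro p
    rw [← Equiv.sum_comp (Equiv.swap (0 : Fin (n+2)) p) (F p),
      Fin.sum_univ_succ (f := fun j => F p (Equiv.swap 0 p j)), Equiv.swap_apply_left]
  rw [h1, Finset.smul_sum, ← Finset.sum_add_distrib, Finset.smul_sum]
  refine Finset.sum_congr rfl fun p _ => ?_
  rw [← smul_add, add_comm (∑ q : Fin (n+1), F p (Equiv.swap 0 p q.succ)) (F p p), h2 p]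

lemma sum_if_lt' {M : Type*} [AddCommMonoid M] (N m : ℕ) (hm : m ≤ N) (x y : M) :
    ∑ i : Fin N, (if (i : ℕ) < m then x else y) = m • x + (N - m) • y := by
  rw [Fin.sum_univ_eq_sum_range (fun i => if i < m then x else y) N, Finset.sum_ite]
  simp only [Finset.sum_const]
  have h1 : (Finset.range N).filter (fun i => i < m) = Finset.range m := by
    ext i; simp; omega
  have h2 : ((Finset.range N).filter (fun i => ¬ i < m)).card = N - m := by
    have h3 := Finset.card_filter_add_card_filter_not
      (s := Finset.range N) (p := fun i => i < m)
    rw [h1] at h3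
    simp only [Finset.card_range] at h3
    omega
  rw [h1, h2, Finset.card_range]

lemma pi_dirac' {N : ℕ} (c : Fin N → R3) :
    (Measure.pi fun i => Measure.dirac (c i)) = Measure.dirac c := by
  refine Measure.pi_eq fun s hs => ?_
  rw [Measure.dirac_apply' _ (MeasurableSet.univ_pi hs)]
  by_cases h : ∀ i, c i ∈ s i
  · rw [Set.indicator_of_mem (by simpa [Set.mem_univ_pi] using h)]
    have hv : ∀ i, Measure.dirac (c i) (s i) = 1 := fun i => by
      rw [Measure.dirac_apply' _ (hs i), Set.indicator_of_mem (h i)]; rfl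
    simp [hv]
  · push_neg at h; obtain ⟨i0, hi0⟩ := h
    rw [Set.indicator_of_notMem (by simp only [Set.mem_univ_pi]; exact fun hh => hi0 (hh i0))]
    refine (Finset.prod_eq_zero (Finset.mem_univ i0) ?_).symm
    rw [Measure.dirac_apply' _ (hs i0), Set.indicator_of_notMem hi0]

def symmetrize {N : ℕ} (p : Measure (Fin N → R3)) : Measure (Fin N → R3) :=
  (N.factorial : ℝ≥0∞)⁻¹ • ∑ σ : Equiv.Perm (Fin N), p.map (fun x => x ∘ σ)

def diracProduct (N K : ℕ) (A B : R3) : Measure (Fin N → R3) :=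
  Measure.pi fun i : Fin N => if (i : ℕ) < N - K then Measure.dirac A else Measure.dirac B

set_option maxHeartbeats 1000000 in
/-- With `t = K/N`, the two-point marginal of the symmetrization of
`δ_A^{⊗(N−K)} ⊗ δ_B^{⊗K}` equals the mean-field pair measure
`((1−t)δ_A + tδ_B) ⊗ ((1−t)δ_A + tδ_B)` plus the correction
`(t(1−t)/(N−1)) (−δ_A⊗δ_A − δ_B⊗δ_B + δ_A⊗δ_B + δ_B⊗δ_A)`, as an identity of (finite)
signed measures, i.e. an identity of the real values on every measurable set. -/
theorem pairMarginal_symmetrize_eq_meanfield_plus_correction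
    (N : ℕ) (hN : 2 ≤ N) (K : ℕ) (hK : K ≤ N) (A B : R3)
    (t : ℝ) (ht : t = (K : ℝ) / N)
    (μ : Measure R3)
    (hμ : μ = ENNReal.ofReal (1 - t) • Measure.dirac A + ENNReal.ofReal t • Measure.dirac B) :
    ∀ s : Set (R3 × R3), MeasurableSet s →
      ((pairMarginal hN (symmetrize (diracProduct N K A B))) s).toReal
        = ((μ.prod μ) s).toReal
          + (t * (1 - t) / ((N : ℝ) - 1)) *
              ( -(((Measure.dirac A).prod (Measure.dirac A)) s).toReal
                - (((Measure.dirac B).prod (Measure.dirac B)) s).toReal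
                + (((Measure.dirac A).prod (Measure.dirac B)) s).toReal
                + (((Measure.dirac B).prod (Measure.dirac A)) s).toReal ) := by
  intro s hs
  obtain ⟨n, rfl⟩ : ∃ n, N = n + 2 := ⟨N - 2, by omega⟩
  set Mn := (n + 2) - K with hMn
  have hMle : Mn ≤ n + 2 := by omega
  have hKM : (n + 2) - Mn = K := by omega
  set c : Fin (n + 2) → R3 := fun i => if (i : ℕ) < Mn then A else B with hc
  set e : R3 × R3 → ℝ≥0∞ := s.indicator 1 with he
  have he_ne : ∀ z : R3 × R3, e z ≠ ∞ := by
    intro z; by_cases hz : z ∈ s <;> simp [he, hz]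
  -- step 1 : diracProduct is a dirac
  have hdp : diracProduct (n + 2) K A B = Measure.dirac c := by
    rw [diracProduct]
    have h : ∀ i : Fin (n + 2),
        (if (i : ℕ) < (n + 2) - K then Measure.dirac A else Measure.dirac B)
          = Measure.dirac (c i) := by
      intro i
      rw [hc]
      simp only [← hMn]
      split <;> rfl
    simp_rw [h]
    exact pi_dirac' c
  -- measurability
  have hproj : Measurable (fun x : Fin (n + 2) → R3 => (x 0, x 1)) :=
    (measurable_pi_apply _).prodMk (measurable_pi_apply _)
  have hperm : ∀ σ : Equiv.Perm (Fin (n + 2)),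
      Measurable (fun x : Fin (n + 2) → R3 => x ∘ σ) := fun σ =>
    measurable_pi_lambda _ fun i => measurable_pi_apply _
  -- value of the LHS measure
  have hval : (pairMarginal hN (symmetrize (diracProduct (n + 2) K A B))) s
      = ((n + 2).factorial : ℝ≥0∞)⁻¹
          * ∑ σ : Equiv.Perm (Fin (n + 2)), e (c (σ 0), c (σ 1)) := by
    rw [pairMarginal]
    simp only [Fin.mk_zero, Fin.mk_one]
    rw [Measure.map_apply hproj hs, symmetrize, hdp, Measure.smul_apply,
      Measure.finset_sum_apply]
    rw [smul_eq_mul]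
    congr 1
    refine Finset.sum_congr rfl fun σ _ => ?_
    rw [Measure.map_dirac' (hperm σ), Measure.dirac_apply' _ (hproj hs)]
    rw [he]
    by_cases hmem : ((c (σ 0), c (σ 1)) : R3 × R3) ∈ s
    · rw [Set.indicator_of_mem (by simpa using hmem), Set.indicator_of_mem hmem]; rfl
    · rw [Set.indicator_of_notMem (by simpa using hmem), Set.indicator_of_notMem hmem]
  -- the permutation sum identity
  have E := sum_perm_pair' (fun p j : Fin (n + 2) => e (c p, c j))
  -- compute the diagonal sum
  have hdiag : ∑ p : Fin (n + 2), e (c p, c p) = Mn • e (A, A) + K • e (B, B) := by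
    have h : ∀ p : Fin (n + 2), e (c p, c p)
        = if (p : ℕ) < Mn then e (A, A) else e (B, B) := by
      intro p; by_cases hp : (p : ℕ) < Mn <;> simp [hc, hp]
    rw [Finset.sum_congr rfl fun p _ => h p, sum_if_lt' _ _ hMle, hKM]
  -- compute the total sum
  have htot : ∑ p : Fin (n + 2), ∑ j : Fin (n + 2), e (c p, c j)
      = Mn • (Mn • e (A, A) + K • e (A, B)) + K • (Mn • e (B, A) + K • e (B, B)) := by
    have hrow : ∀ p : Fin (n + 2), ∑ j : Fin (n + 2), e (c p, c j)
        = if (p : ℕ) < Mn then Mn • e (A, A) + K • e (A, B)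
          else Mn • e (B, A) + K • e (B, B) := by
      intro p
      have h : ∀ j : Fin (n + 2), e (c p, c j)
          = if (j : ℕ) < Mn then e (c p, A) else e (c p, B) := by
        intro j; by_cases hj : (j : ℕ) < Mn <;> simp [hc, hj]
      rw [Finset.sum_congr rfl fun j _ => h j, sum_if_lt' _ _ hMle, hKM]
      by_cases hp : (p : ℕ) < Mn <;> simp [hc, hp]
    rw [Finset.sum_congr rfl fun p _ => hrow p, sum_if_lt' _ _ hMle, hKM]
  rw [hdiag, htot] at E
  -- helper facts for realification
  have hsm : ∀ (k : ℕ) (x : ℝ≥0∞), (k • x).toReal = k * x.toReal := by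
    intro k x; rw [nsmul_eq_mul, ENNReal.toReal_mul, ENNReal.toReal_natCast]
  have hne : ∀ (k l : ℕ) (x y : ℝ≥0∞), x ≠ ∞ → y ≠ ∞ → (k • x + l • y) ≠ ∞ := by
    intro k l x y hx hy
    rw [nsmul_eq_mul, nsmul_eq_mul]
    exact ENNReal.add_ne_top.2 ⟨ENNReal.mul_ne_top (ENNReal.natCast_ne_top k) hx,
      ENNReal.mul_ne_top (ENNReal.natCast_ne_top l) hy⟩
  have hpair : ∀ (k l : ℕ) (x y : ℝ≥0∞), x ≠ ∞ → y ≠ ∞ →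
      (k • x + l • y).toReal = k * x.toReal + l * y.toReal := by
    intro k l x y hx hy
    rw [nsmul_eq_mul, nsmul_eq_mul,
      ENNReal.toReal_add (ENNReal.mul_ne_top (ENNReal.natCast_ne_top k) hx)
        (ENNReal.mul_ne_top (ENNReal.natCast_ne_top l) hy),
      ENNReal.toReal_mul, ENNReal.toReal_mul, ENNReal.toReal_natCast, ENNReal.toReal_natCast]
  set a := (e (A, A)).toReal with ha
  set b := (e (B, B)).toReal with hb
  set u := (e (A, B)).toReal with hu
  set v := (e (B, A)).toReal with hv
  have hS_ne : (∑ σ : Equiv.Perm (Fin (n + 2)), e (c (σ 0), c (σ 1))) ≠ ∞ :=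
    (ENNReal.sum_lt_top.2 fun σ _ => (he_ne _).lt_top).ne
  -- realified permutation identity
  have hD : ((Mn • e (A, A) + K • e (B, B) : ℝ≥0∞)).toReal
      = (Mn : ℝ) * a + (K : ℝ) * b := hpair _ _ _ _ (he_ne _) (he_ne _)
  have hT1 : ((Mn • e (A, A) + K • e (A, B) : ℝ≥0∞)).toReal
      = (Mn : ℝ) * a + (K : ℝ) * u := hpair _ _ _ _ (he_ne _) (he_ne _)
  have hT2 : ((Mn • e (B, A) + K • e (B, B) : ℝ≥0∞)).toReal
      = (Mn : ℝ) * v + (K : ℝ) * b := hpair _ _ _ _ (he_ne _) (he_ne _)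
  have Ereal : (∑ σ : Equiv.Perm (Fin (n + 2)), e (c (σ 0), c (σ 1))).toReal
      + (n.factorial : ℝ) * ((Mn : ℝ) * a + (K : ℝ) * b)
      = (n.factorial : ℝ) * ((Mn : ℝ) * ((Mn : ℝ) * a + (K : ℝ) * u)
          + (K : ℝ) * ((Mn : ℝ) * v + (K : ℝ) * b)) := by
    have h := congrArg ENNReal.toReal E
    rw [ENNReal.toReal_add hS_ne
          (by rw [nsmul_eq_mul]
              exact ENNReal.mul_ne_top (ENNReal.natCast_ne_top _)
                (hne _ _ _ _ (he_ne _) (he_ne _))),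
        hsm n.factorial (Mn • e (A, A) + K • e (B, B)), hD,
        hsm n.factorial (Mn • (Mn • e (A, A) + K • e (A, B)) + K • (Mn • e (B, A) + K • e (B, B))),
        hpair _ _ _ _ (hne _ _ _ _ (he_ne _) (he_ne _)) (hne _ _ _ _ (he_ne _) (he_ne _)),
        hT1, hT2] at h
    exact h
  -- bounds on t
  have hn2 : ((n + 2 : ℕ) : ℝ) = (n : ℝ) + 2 := by push_cast; ring
  have ht' : t = (K : ℝ) / ((n : ℝ) + 2) := by rw [ht, hn2]
  have ht0 : 0 ≤ t := by rw [ht']; positivity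
  have ht1 : t ≤ 1 := by
    rw [ht', div_le_one (by positivity)]
    have : (K : ℝ) ≤ ((n + 2 : ℕ) : ℝ) := by exact_mod_cast hK
    rw [hn2] at this; exact this
  have h1t : 0 ≤ 1 - t := by linarith
  -- the product measure value
  have hsfin : SFinite μ := by rw [hμ]; infer_instance
  have hind : ∀ x y : R3, (Prod.mk x ⁻¹' s).indicator (1 : R3 → ℝ≥0∞) y = e (x, y) := by
    intro x y
    rw [he]
    by_cases hxy : (x, y) ∈ s
    · rw [Set.indicator_of_mem hxy (1 : R3 × R3 → ℝ≥0∞),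
        Set.indicator_of_mem (show y ∈ Prod.mk x ⁻¹' s from hxy) (1 : R3 → ℝ≥0∞)]
      rfl
    · rw [Set.indicator_of_notMem hxy (1 : R3 × R3 → ℝ≥0∞),
        Set.indicator_of_notMem (show y ∉ Prod.mk x ⁻¹' s from hxy) (1 : R3 → ℝ≥0∞)]
  have hx : ∀ x : R3, μ (Prod.mk x ⁻¹' s)
      = ENNReal.ofReal (1 - t) * e (x, A) + ENNReal.ofReal t * e (x, B) := by
    intro x
    rw [hμ, Measure.add_apply, Measure.smul_apply, Measure.smul_apply,
      Measure.dirac_apply' _ (measurable_prodMk_left hs),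
      Measure.dirac_apply' _ (measurable_prodMk_left hs), smul_eq_mul, smul_eq_mul,
      hind, hind]
  have hprod : (μ.prod μ) s
      = ENNReal.ofReal (1 - t) * (ENNReal.ofReal (1 - t) * e (A, A)
          + ENNReal.ofReal t * e (A, B))
        + ENNReal.ofReal t * (ENNReal.ofReal (1 - t) * e (B, A)
          + ENNReal.ofReal t * e (B, B)) := by
    rw [Measure.prod_apply hs]
    simp_rw [hx]
    conv_lhs => rw [hμ]
    rw [lintegral_add_measure, lintegral_smul_measure, lintegral_smul_measure,
      lintegral_dirac, lintegral_dirac, smul_eq_mul, smul_eq_mul]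
  have hmul_ne : ∀ (r : ℝ) (z : R3 × R3), ENNReal.ofReal r * e z ≠ ∞ := fun r z =>
    ENNReal.mul_ne_top ENNReal.ofReal_ne_top (he_ne z)
  have hprod_real : ((μ.prod μ) s).toReal
      = (1 - t) * ((1 - t) * a + t * u) + t * ((1 - t) * v + t * b) := by
    rw [hprod,
      ENNReal.toReal_add
        (ENNReal.mul_ne_top ENNReal.ofReal_ne_top
          (ENNReal.add_ne_top.2 ⟨hmul_ne _ _, hmul_ne _ _⟩))
        (ENNReal.mul_ne_top ENNReal.ofReal_ne_top
          (ENNReal.add_ne_top.2 ⟨hmul_ne _ _, hmul_ne _ _⟩)),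
      ENNReal.toReal_mul, ENNReal.toReal_mul,
      ENNReal.toReal_add (hmul_ne _ _) (hmul_ne _ _),
      ENNReal.toReal_add (hmul_ne _ _) (hmul_ne _ _),
      ENNReal.toReal_mul, ENNReal.toReal_mul, ENNReal.toReal_mul, ENNReal.toReal_mul,
      ENNReal.toReal_ofReal h1t, ENNReal.toReal_ofReal ht0]
  -- values of the dirac products
  have hdAA : (((Measure.dirac A).prod (Measure.dirac A)) s).toReal = a := by
    rw [Measure.dirac_prod_dirac, Measure.dirac_apply' _ hs, ← he]
  have hdBB : (((Measure.dirac B).prod (Measure.dirac B)) s).toReal = b := by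
    rw [Measure.dirac_prod_dirac, Measure.dirac_apply' _ hs, ← he]
  have hdAB : (((Measure.dirac A).prod (Measure.dirac B)) s).toReal = u := by
    rw [Measure.dirac_prod_dirac, Measure.dirac_apply' _ hs, ← he]
  have hdBA : (((Measure.dirac B).prod (Measure.dirac A)) s).toReal = v := by
    rw [Measure.dirac_prod_dirac, Measure.dirac_apply' _ hs, ← he]
  -- LHS value
  have hLHS : ((pairMarginal hN (symmetrize (diracProduct (n + 2) K A B))) s).toReal
      = (((n + 2).factorial : ℝ))⁻¹
          * (∑ σ : Equiv.Perm (Fin (n + 2)), e (c (σ 0), c (σ 1))).toReal := by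
    rw [hval, ENNReal.toReal_mul, ENNReal.toReal_inv, ENNReal.toReal_natCast]
  rw [hLHS, hprod_real, hdAA, hdBB, hdAB, hdBA]
  -- final algebra
  have hSeq : (∑ σ : Equiv.Perm (Fin (n + 2)), e (c (σ 0), c (σ 1))).toReal
      = (n.factorial : ℝ) * ((Mn : ℝ) * ((Mn : ℝ) * a + (K : ℝ) * u)
          + (K : ℝ) * ((Mn : ℝ) * v + (K : ℝ) * b))
        - (n.factorial : ℝ) * ((Mn : ℝ) * a + (K : ℝ) * b) := by linarith [Ereal]
  have hMcast : (Mn : ℝ) = (n : ℝ) + 2 - K := by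
    rw [hMn, Nat.cast_sub hK, hn2]
  have hfac : (((n + 2).factorial : ℕ) : ℝ)
      = ((n : ℝ) + 2) * ((n : ℝ) + 1) * (n.factorial : ℝ) := by
    show (((n + 1 + 1).factorial : ℕ) : ℝ) = _
    rw [Nat.factorial_succ, Nat.factorial_succ]
    push_cast; ring
  have hfne : (n.factorial : ℝ) ≠ 0 := by positivity
  have hn0 : ((n : ℝ) + 2) ≠ 0 := by positivity
  have hn1 : ((n : ℝ) + 1) ≠ 0 := by positivity
  rw [hSeq, hMcast, hfac, ht', hn2,
    show ((n : ℝ) + 2 - 1) = (n : ℝ) + 1 from by ring]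
  field_simp
  ring

end
end

section
/- Let N ≥ 2, let p₂ be an N-density representable probability measure on ℝ³ × ℝ³, let Ω_A, Ω_B be a measurable partition of ℝ³ (Ω_A ∩ Ω_B = ∅, Ω_A ∪ Ω_B = ℝ³), and fix two distinct points A, B ∈ ℝ³. Define α_ij = p₂(Ω_i × Ω_j) for i, j ∈ {A,B}. Then the associated 2-site pair measure α_AA δ_A⊗δ_A + α_AB δ_A⊗δ_B + α_BA δ_B⊗δ_A + α_BB δ_B⊗δ_B is also N-density representable. -/
open MeasureTheory ENNReal

noncomputable section

lemma map_of_const_on {α β : Type*} [MeasurableSpace α] [MeasurableSpace β]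
    (μ : Measure α) {S : Set α} (hS : MeasurableSet S) {g : α → β} (c : β)
    (hc : ∀ x ∈ S, g x = c) :
    (μ.restrict S).map g = μ S • Measure.dirac c := by
  rw [Measure.map_congr (g := fun _ => c) ?_, Measure.map_const, Measure.restrict_apply_univ]
  filter_upwards [ae_restrict_mem hS] with x hx using hc x hx

/-- Necessary condition for `N`-density representability: coarse-graining with respect to a
measurable two-set partition `Ω_A, Ω_B` of `ℝ³` maps `N`-density representable pair
measures to `N`-density representable two-site pair measures
`α_AA δ_A⊗δ_A + α_AB δ_A⊗δ_B + α_BA δ_B⊗δ_A + α_BB δ_B⊗δ_B`, `α_ij = p₂(Ω_i × Ω_j)`. -/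
theorem coarse_grained_is_N_rep (N : ℕ) (hN : 2 ≤ N)
    (p₂ : Measure (R3 × R3)) [IsProbabilityMeasure p₂] (hrep : NDensityRep N hN p₂)
    (ΩA ΩB : Set R3) (hΩA : MeasurableSet ΩA) (hΩB : MeasurableSet ΩB)
    (hdisj : ΩA ∩ ΩB = ∅) (hcover : ΩA ∪ ΩB = Set.univ)
    (A B : R3) (hAB : A ≠ B) :
    NDensityRep N hN
      (p₂ (ΩA ×ˢ ΩA) • (Measure.dirac A).prod (Measure.dirac A)
        + p₂ (ΩA ×ˢ ΩB) • (Measure.dirac A).prod (Measure.dirac B)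
        + p₂ (ΩB ×ˢ ΩA) • (Measure.dirac B).prod (Measure.dirac A)
        + p₂ (ΩB ×ˢ ΩB) • (Measure.dirac B).prod (Measure.dirac B)) := by
  obtain ⟨pN, hprob, hsym, hmarg⟩ := hrep
  classical
  set f : R3 → R3 := ΩA.piecewise (fun _ => A) (fun _ => B) with hf
  have hfm : Measurable f := Measurable.piecewise hΩA measurable_const measurable_const
  have hfA : ∀ x ∈ ΩA, f x = A := fun x hx => Set.piecewise_eq_of_mem _ _ _ hx
  have hfB : ∀ x ∈ ΩB, f x = B := by
    intro x hx
    have : x ∉ ΩA := fun h => Set.eq_empty_iff_forall_notMem.mp hdisj x ⟨h, hx⟩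
    exact Set.piecewise_eq_of_notMem _ _ _ this
  have hFm : Measurable (fun x : Fin N → R3 => f ∘ x) :=
    measurable_pi_lambda _ (fun i => hfm.comp (measurable_pi_apply i))
  refine ⟨pN.map (fun x => f ∘ x), Measure.isProbabilityMeasure_map hFm.aemeasurable, ?_, ?_⟩
  · intro σ
    have hσm : Measurable (fun x : Fin N → R3 => x ∘ σ) :=
      measurable_pi_lambda _ (fun i => measurable_pi_apply (σ i))
    rw [Measure.map_map hσm hFm]
    have heq : ((fun x : Fin N → R3 => x ∘ σ) ∘ (fun x => f ∘ x)) =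
        (fun x : Fin N → R3 => f ∘ x) ∘ (fun x => x ∘ σ) := rfl
    rw [heq, ← Measure.map_map hFm hσm, hsym σ]
  · have hπ : Measurable (fun x : Fin N → R3 =>
        (x (⟨0, by omega⟩ : Fin N), x (⟨1, by omega⟩ : Fin N))) :=
      (measurable_pi_apply _).prodMk (measurable_pi_apply _)
    have hg : Measurable (Prod.map f f) := hfm.prodMap hfm
    rw [pairMarginal, Measure.map_map hπ hFm]
    have heq : ((fun x : Fin N → R3 =>
        (x (⟨0, by omega⟩ : Fin N), x (⟨1, by omega⟩ : Fin N))) ∘ (fun x => f ∘ x)) =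
        (Prod.map f f) ∘ (fun x : Fin N → R3 =>
        (x (⟨0, by omega⟩ : Fin N), x (⟨1, by omega⟩ : Fin N))) := rfl
    rw [heq, ← Measure.map_map hg hπ]
    rw [show pN.map (fun x : Fin N → R3 =>
        (x (⟨0, by omega⟩ : Fin N), x (⟨1, by omega⟩ : Fin N))) = pairMarginal hN pN from rfl,
      hmarg]
    -- decompose p₂ into restrictions to the four rectangles
    have hdp : Disjoint ΩA ΩB := Set.disjoint_iff_inter_eq_empty.mpr hdisj
    have hAA : MeasurableSet (ΩA ×ˢ ΩA) := hΩA.prod hΩA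
    have hAB' : MeasurableSet (ΩA ×ˢ ΩB) := hΩA.prod hΩB
    have hBA : MeasurableSet (ΩB ×ˢ ΩA) := hΩB.prod hΩA
    have hBB : MeasurableSet (ΩB ×ˢ ΩB) := hΩB.prod hΩB
    have hdAB : Disjoint (ΩA ×ˢ ΩA) (ΩA ×ˢ ΩB) := by
      rw [Set.disjoint_iff_inter_eq_empty, Set.prod_inter_prod, hdisj, Set.prod_empty]
    have hdBA : Disjoint (ΩB ×ˢ ΩA) (ΩB ×ˢ ΩB) := by
      rw [Set.disjoint_iff_inter_eq_empty, Set.prod_inter_prod, hdisj, Set.prod_empty]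
    have hdU : Disjoint ((ΩA ×ˢ ΩA) ∪ (ΩA ×ˢ ΩB)) ((ΩB ×ˢ ΩA) ∪ (ΩB ×ˢ ΩB)) := by
      rw [← Set.prod_union, ← Set.prod_union, hcover, Set.disjoint_iff_inter_eq_empty,
        Set.prod_inter_prod, hdisj, Set.empty_prod]
    have hU : (ΩA ×ˢ ΩA ∪ ΩA ×ˢ ΩB) ∪ (ΩB ×ˢ ΩA ∪ ΩB ×ˢ ΩB) = Set.univ := by
      rw [← Set.prod_union, ← Set.prod_union, hcover, ← Set.union_prod, hcover,
        Set.univ_prod_univ]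
    have hdecomp : p₂ = p₂.restrict (ΩA ×ˢ ΩA) + p₂.restrict (ΩA ×ˢ ΩB)
        + p₂.restrict (ΩB ×ˢ ΩA) + p₂.restrict (ΩB ×ˢ ΩB) := by
      calc p₂ = p₂.restrict Set.univ := Measure.restrict_univ.symm
        _ = p₂.restrict ((ΩA ×ˢ ΩA ∪ ΩA ×ˢ ΩB) ∪ (ΩB ×ˢ ΩA ∪ ΩB ×ˢ ΩB)) := by rw [hU]
        _ = _ := by
          rw [Measure.restrict_union hdU (hBA.union hBB), Measure.restrict_union hdAB hAB',
            Measure.restrict_union hdBA hBB, ← add_assoc]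
    have key : ∀ (S T : Set R3), MeasurableSet (S ×ˢ T) → ∀ c d : R3,
        (∀ x ∈ S, f x = c) → (∀ x ∈ T, f x = d) →
        (p₂.restrict (S ×ˢ T)).map (Prod.map f f) = p₂ (S ×ˢ T) • Measure.dirac (c, d) := by
      intro S T hST c d hc hd
      exact map_of_const_on p₂ hST (c, d)
        (fun x hx => Prod.ext (hc x.1 hx.1) (hd x.2 hx.2))
    conv_lhs => rw [hdecomp]
    rw [Measure.map_add _ _ hg, Measure.map_add _ _ hg, Measure.map_add _ _ hg,
      key ΩA ΩA hAA A A hfA hfA, key ΩA ΩB hAB' A B hfA hfB,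
      key ΩB ΩA hBA B A hfB hfA, key ΩB ΩB hBB B B hfB hfB,
      Measure.dirac_prod_dirac, Measure.dirac_prod_dirac, Measure.dirac_prod_dirac,
      Measure.dirac_prod_dirac]

end
end

section
/- Let v : ℝ³ × ℝ³ → [0,∞] be a measurable symmetric pair potential, let p₁ be a probability measure on ℝ³, let N ≥ 2, and for each k with 2 ≤ k ≤ N define V^k = inf over k-density representable probability measures p₂ on ℝ³ × ℝ³ with first marginal p₁ of (N choose 2) ∫ v dp₂. Then V^k is nondecreasing in k: for 2 ≤ k ≤ l ≤ N, V^k ≤ V^l. -/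
open MeasureTheory ENNReal

noncomputable section

/-- The order-`k` approximation
`V^k = inf { (N choose 2) ∫ v dp₂ : p₂ k-density representable, first marginal p₁ }`
of the SCE energy. -/
def VSCE (N : ℕ) (v : R3 × R3 → ℝ≥0∞) (p₁ : Measure R3) (k : ℕ) (hk : 2 ≤ k) : ℝ≥0∞ :=
  sInf {E : ℝ≥0∞ | ∃ p₂ : Measure (R3 × R3), IsProbabilityMeasure p₂ ∧
    NDensityRep k hk p₂ ∧ p₂.map Prod.fst = p₁ ∧
    E = (N.choose 2 : ℝ≥0∞) * ∫⁻ z, v z ∂p₂}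

lemma NDensityRep.mono {k l : ℕ} (hk : 2 ≤ k) (hkl : k ≤ l) (p₂ : Measure (R3 × R3))
    (h : NDensityRep l (hk.trans hkl) p₂) : NDensityRep k hk p₂ := by
  obtain ⟨pl, hprob, hsym, hpair⟩ := h
  set π : (Fin l → R3) → (Fin k → R3) := fun x => x ∘ Fin.castLE hkl with hπ
  have hπm : Measurable π := measurable_pi_lambda _ (fun i => measurable_pi_apply _)
  refine ⟨pl.map π, ?_, ?_, ?_⟩
  · exact Measure.isProbabilityMeasure_map hπm.aemeasurable
  · intro σ
    set σ' : Equiv.Perm (Fin l) := σ.viaFintypeEmbedding (Fin.castLEEmb hkl) with hσ'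
    have hcomm : (fun x : Fin k → R3 => x ∘ σ) ∘ π = π ∘ (fun x : Fin l → R3 => x ∘ σ') := by
      funext x
      funext i
      simp only [Function.comp_apply, hπ, hσ']
      have := Equiv.Perm.viaFintypeEmbedding_apply_image σ (Fin.castLEEmb hkl) i
      simp only [Fin.castLEEmb_apply] at this
      exact congrArg x this.symm
    have hσm : Measurable (fun x : Fin k → R3 => x ∘ σ) :=
      measurable_pi_lambda _ (fun i => measurable_pi_apply _)
    have hσ'm : Measurable (fun x : Fin l → R3 => x ∘ σ') :=
      measurable_pi_lambda _ (fun i => measurable_pi_apply _)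
    rw [Measure.map_map hσm hπm, hcomm, ← Measure.map_map hπm hσ'm, hsym σ']
  · rw [← hpair]
    unfold pairMarginal
    rw [Measure.map_map (by fun_prop) hπm]
    rfl

/-- The order-`k` approximation of the SCE energy is nondecreasing in `k`:
for `2 ≤ k ≤ l ≤ N`, `V^k ≤ V^l`. -/
theorem VSCE_monotone (v : R3 × R3 → ℝ≥0∞) (hv : Measurable v)
    (hvsymm : ∀ x y : R3, v (x, y) = v (y, x))
    (p₁ : Measure R3) [IsProbabilityMeasure p₁]
    (N k l : ℕ) (hN : 2 ≤ N) (hk : 2 ≤ k) (hkl : k ≤ l) (hlN : l ≤ N) :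
    VSCE N v p₁ k hk ≤ VSCE N v p₁ l (hk.trans hkl) := by
  apply sInf_le_sInf
  rintro E ⟨p₂, hp, hrep, hmarg, hE⟩
  exact ⟨p₂, hp, hrep.mono hk hkl p₂, hmarg, hE⟩

end
end
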